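/- Let J be a finite index set; for each j ∈ J let r_j ≥ 2 be an integer and b_j an integer coprime to r_j, and let K ∈ ℚ. For n ≥ 0 define χ(n) = 1 + ((2n³+3n²+n)/12)·K + (n/12)·( 24 − ∑_{j∈J} (r_j²−1)/r_j ) + ∑_{j∈J} ( −[−n]_{r_j}·(r_j²−1)/(12 r_j) + ∑_{k=1}^{[−n]_{r_j} − 1} [b_j·k]_{r_j}·(r_j − [b_j·k]_{r_j})/(2 r_j) ). Then in ℚ⟦t⟧: ∑_{n≥0} χ(n)·t^n = (1+t)·((1−t)²)⁻¹ + (K/2)·(t+t²)·((1−t)⁴)⁻¹ − ∑_{j∈J} ((1−t)·(1−t^{r_j}))⁻¹ · ∑_{i=1}^{r_j−1} ([b_j·i]_{r_j}·(r_j − [b_j·i]_{r_j})/(2 r_j))·t^i, where all inverses are of units in ℚ⟦t⟧. -/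

import Mathlib

/-!
Compare coefficients. The first two terms expand to `2n + 1` and `(2n³ + 3n² + n) K / 12`.
For a singularity of type `(1/r)(b, 1, -1)` the weight `w k = [bk]_r (r - [bk]_r) / (2r)` is
`r`-periodic and even, and sums to `(r² - 1)/12` over a period because `k ↦ bk` permutes the
residues mod `r`. Periodicity makes `((1 - t)(1 - t^r))⁻¹ ∑_{i<r} w i tⁱ` the series of partial
sums `∑_{k ≤ n} w k`, and periodicity together with evenness identify the correction term of
Reid's formula with `n (r² - 1)/(12 r) - ∑_{k ≤ n} w k`.
-/

open PowerSeries Finset Function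

theorem Function.Periodic.eq_of_intModEq {α : Type*} {w : ℤ → α} {r : ℤ} (hper : Periodic w r)
    {a b : ℤ} (h : a ≡ b [ZMOD r]) : w a = w b := by
  obtain ⟨t, ht⟩ := Int.modEq_iff_dvd.1 h
  rw [show b = a + t * r by linarith]
  simpa using (hper.int_mul t a).symm

theorem Finset.sum_Ico_comp_mul_emod {M : Type*} [AddCommMonoid M] {r b : ℤ} (hr : 0 < r)
    (hb : IsCoprime b r) (g : ℤ → M) : ∑ k ∈ Ico 0 r, g (b * k % r) = ∑ k ∈ Ico 0 r, g k := by
  obtain ⟨c, v, hcv⟩ := hb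
  have hcb : c * b ≡ 1 [ZMOD r] := Int.modEq_iff_dvd.2 ⟨v, by linarith⟩
  have hinv {x y : ℤ} (hxy : x * y ≡ 1 [ZMOD r]) (k : ℤ) (hk : k ∈ Ico 0 r) :
      x * (y * k % r) % r = k := by
    rw [mem_Ico] at hk
    have : x * (y * k % r) ≡ k [ZMOD r] :=
      calc x * (y * k % r) ≡ x * (y * k) [ZMOD r] := (Int.mod_modEq _ _).mul_left x
        _ = x * y * k := by ring
        _ ≡ 1 * k [ZMOD r] := hxy.mul_right k
        _ = k := one_mul k
    rw [this.eq, Int.emod_eq_of_lt hk.1 hk.2]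
  have hmem (x k : ℤ) : x * k % r ∈ Ico 0 r :=
    mem_Ico.2 ⟨Int.emod_nonneg _ hr.ne', Int.emod_lt_of_pos _ hr⟩
  exact sum_nbij' (fun k => b * k % r) (fun k => c * k % r) (fun k _ => hmem b k)
    (fun k _ => hmem c k) (hinv hcb) (hinv (by rwa [mul_comm])) (fun _ _ => rfl)

theorem sum_Ico_intCast_mul_sub (c : ℚ) (N : ℕ) :
    ∑ k ∈ Ico (0 : ℤ) N, (k : ℚ) * (c - k)
      = c * N * (N - 1) / 2 - (N - 1) * N * (2 * N - 1) / 6 := by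
  induction N with
  | zero => simp
  | succ N ih =>
    rw [Nat.cast_succ, ← insert_Ico_right_eq_Ico_add_one (by positivity), sum_insert (by simp), ih]
    push_cast
    ring

/-- Induction on `n`, with `m = [-n]_r`: evenness and periodicity give `w (m - 1) = w (n + 1)`,
so passing from `n` to `n + 1` moves that term from the first sum to the second when `m > 0`,
and completes a period when `m = 0`. -/
theorem sum_Ico_neg_emod_add_sum_range {r : ℕ} (hr : 0 < r) {w : ℤ → ℚ} (hper : Periodic w r)
    (heven : w.Even) (h0 : w 0 = 0) (n : ℕ) :
    ∑ k ∈ Ico 0 ((-n : ℤ) % r), w k + ∑ k ∈ range (n + 1), w k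
      = (((n : ℤ) + (-n : ℤ) % r : ℤ) : ℚ) / r * ∑ k ∈ Ico (0 : ℤ) r, w k := by
  have hr' : (0 : ℤ) < r := by exact_mod_cast hr
  induction n with
  | zero => simp [h0]
  | succ n ih =>
    set m := (-n : ℤ) % r
    have hm0 : 0 ≤ m := Int.emod_nonneg _ hr'.ne'
    have hmr : m < r := Int.emod_lt_of_pos _ hr'
    have hmodEq : m - 1 ≡ -n - 1 [ZMOD r] := (Int.mod_modEq _ _).sub_right 1
    have hw : w (m - 1) = w (n + 1 : ℕ) := by
      rw [hper.eq_of_intModEq hmodEq, ← heven]; push_cast; ring_nf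
    have hstep : (-(n + 1 : ℕ) : ℤ) % r = (m - 1) % r := by rw [hmodEq.eq]; push_cast; ring_nf
    rw [sum_range_succ, ← add_assoc, hstep, ← hw]
    rcases hm0.eq_or_lt with hm0 | hm0
    · have hr1 : (-1 : ℤ) % r = r - 1 := by
        rw [← (Int.add_modEq_left (n := (r : ℤ)) (a := -1)).eq, ← sub_eq_add_neg]
        exact Int.emod_eq_of_lt (by omega) (by omega)
      rw [← hm0, zero_sub, hr1, ← hper (-1), neg_add_eq_sub]
      rw [← hm0] at ih
      rw [← insert_Ico_sub_one_right_eq_Ico hr', sum_insert (by simp)] at ih ⊢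
      simp only [Ico_self, sum_empty, zero_add] at ih
      have hq : ((n : ℚ) + 1 + (r - 1)) / r = n / r + 1 := by field_simp; ring
      push_cast at ih ⊢
      rw [hq]
      linear_combination ih
    · rw [Int.emod_eq_of_lt (by omega) (by omega)]
      rw [← insert_Ico_sub_one_right_eq_Ico hm0, sum_insert (by simp)] at ih
      push_cast at ih ⊢
      linear_combination ih

def basketWeight (r : ℕ) (b k : ℤ) : ℚ :=
  ((b * k % r : ℤ) : ℚ) * ((r : ℚ) - ((b * k % r : ℤ) : ℚ)) / (2 * r)

/-- The contribution of a singularity of type `(1/r)(b, 1, -1)` to Reid's formula for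
`χ(O_Y(-nK_Y))`. -/
noncomputable def basketCorrection (r : ℕ) (b : ℤ) (n : ℕ) : ℚ :=
  -(((-n : ℤ) % r : ℤ) : ℚ) * ((r : ℚ) ^ 2 - 1) / (12 * r)
    + ∑ k ∈ Icc 1 ((-n : ℤ) % r - 1), basketWeight r b k

section basket

variable {r : ℕ} {b : ℤ}

theorem basketWeight_zero : basketWeight r b 0 = 0 := by simp [basketWeight]

theorem basketWeight_periodic : Periodic (basketWeight r b) r := by
  intro k
  simp only [basketWeight, mul_add, Int.add_mul_emod_self_right]

theorem basketWeight_even : (basketWeight r b).Even := by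
  intro k
  simp only [basketWeight, mul_neg, Int.neg_emod, Int.natAbs_natCast]
  split_ifs with h
  · simp [Int.emod_eq_zero_of_dvd h]
  · push_cast
    ring

theorem sum_basketWeight (hr : 0 < r) (hb : IsCoprime b r) :
    ∑ k ∈ Ico (0 : ℤ) r, basketWeight r b k = ((r : ℚ) ^ 2 - 1) / 12 := by
  have hr' : (r : ℚ) ≠ 0 := by positivity
  calc ∑ k ∈ Ico (0 : ℤ) r, basketWeight r b k
      = ∑ k ∈ Ico (0 : ℤ) r, (k : ℚ) * (r - k) / (2 * r) :=
        sum_Ico_comp_mul_emod (by exact_mod_cast hr) hb fun u : ℤ => (u : ℚ) * (r - u) / (2 * r)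
    _ = ((r : ℚ) ^ 2 - 1) / 12 := by
        rw [← sum_div, sum_Ico_intCast_mul_sub]
        field_simp
        ring

theorem basketCorrection_eq (hr : 0 < r) (hb : IsCoprime b r) (n : ℕ) :
    basketCorrection r b n
      = n / 12 * (((r : ℚ) ^ 2 - 1) / r) - ∑ k ∈ range (n + 1), basketWeight r b k := by
  have hr' : (r : ℚ) ≠ 0 := by positivity
  have key := sum_Ico_neg_emod_add_sum_range hr (basketWeight_periodic (b := b)) basketWeight_even
    basketWeight_zero n
  rw [sum_basketWeight hr hb] at key
  have hIco : ∑ k ∈ Ico 0 ((-n : ℤ) % r), basketWeight r b k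
      = ∑ k ∈ Icc 1 ((-n : ℤ) % r - 1), basketWeight r b k := by
    rw [Icc_sub_one_right_eq_Ico]
    refine (sum_subset (Ico_subset_Ico_left zero_le_one) fun k hk hk' => ?_).symm
    obtain rfl : k = 0 := by simp only [mem_Ico, not_and, not_lt] at hk hk'; omega
    exact basketWeight_zero
  rw [basketCorrection, ← hIco]
  push_cast at key
  field_simp at key ⊢
  linear_combination key

end basket

theorem mk_sum_range_succ_mul_one_sub {R : Type*} [CommRing R] (f : ℕ → R) :
    PowerSeries.mk (fun n => ∑ k ∈ range (n + 1), f k) * (1 - X) = PowerSeries.mk f := by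
  ext (_ | n)
  · simp
  · simp [mul_sub, coeff_succ_mul_X, sum_range_succ]

theorem mk_mul_one_sub_X_pow_of_periodic {R : Type*} [CommRing R] {f : ℕ → R} {r : ℕ}
    (hf : Periodic f r) : PowerSeries.mk f * (1 - X ^ r) = ∑ i ∈ range r, C (f i) * X ^ i := by
  ext n
  rw [mul_sub, mul_one, map_sub, map_sum, coeff_mul_X_pow']
  simp only [coeff_C_mul_X_pow, coeff_mk, sum_ite_eq, mem_range]
  by_cases h : r ≤ n
  · rw [if_pos h, if_neg (by omega), ← hf (n - r), Nat.sub_add_cancel h, sub_self]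
  · rw [if_neg h, if_pos (by omega), sub_zero]

section Field

variable {k : Type*} [Field k]

theorem one_add_X_mul_inv_one_sub_X_sq :
    (1 + X) * ((1 - X : k⟦X⟧) ^ 2)⁻¹ = PowerSeries.mk fun n => 2 * (n : k) + 1 := by
  rw [eq_comm, eq_mul_inv_iff_mul_eq (by simp)]
  have : (1 - X : k⟦X⟧) ^ 2 = 1 - X * C 2 + X ^ 2 := by simp only [map_ofNat]; ring
  ext (_ | _ | n) <;> simp [this, mul_add, mul_sub, ← mul_assoc, coeff_mul_X_pow', coeff_X]
  ring

theorem C_half_mul_X_add_X_sq_mul_inv_one_sub_X_pow_four [CharZero k] (a : k) :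
    C (a / 2) * (X + X ^ 2) * ((1 - X : k⟦X⟧) ^ 4)⁻¹
      = PowerSeries.mk fun n => (2 * (n : k) ^ 3 + 3 * (n : k) ^ 2 + n) / 12 * a := by
  rw [eq_comm, eq_mul_inv_iff_mul_eq (by simp)]
  have : (1 - X : k⟦X⟧) ^ 4 = 1 - X * C 4 + X ^ 2 * C 6 - X ^ 3 * C 4 + X ^ 4 := by
    simp only [map_ofNat]; ring
  ext (_ | _ | _ | _ | n) <;> simp [this, mul_add, mul_sub, ← mul_assoc, coeff_mul_X_pow'] <;> ring

theorem inv_one_sub_X_mul_one_sub_X_pow_mul_sum {f : ℕ → k} {r : ℕ} (hr : 0 < r)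
    (hf : Periodic f r) :
    ((1 - X) * (1 - X ^ r))⁻¹ * ∑ i ∈ range r, C (f i) * X ^ i
      = PowerSeries.mk fun n => ∑ i ∈ range (n + 1), f i := by
  rw [mul_comm, eq_comm, eq_mul_inv_iff_mul_eq (by simp [hr.ne']), ← mul_assoc,
    mk_sum_range_succ_mul_one_sub, mk_mul_one_sub_X_pow_of_periodic hf]

end Field

theorem inv_one_sub_X_mul_one_sub_X_pow_mul_sum_basketWeight {r : ℕ} (hr : 0 < r) (b : ℤ) :
    ((1 - X) * (1 - X ^ r))⁻¹ * ∑ i ∈ Icc 1 (r - 1), C (basketWeight r b i) * X ^ i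
      = PowerSeries.mk fun n => ∑ i ∈ range (n + 1), basketWeight r b i := by
  have hIcc : ∑ i ∈ Icc 1 (r - 1), C (basketWeight r b i) * X ^ i
      = ∑ i ∈ range r, C (basketWeight r b i) * X ^ i := by
    refine sum_subset (fun i hi => by simp only [mem_Icc, mem_range] at hi ⊢; omega)
      fun i hi hi' => ?_
    obtain rfl : i = 0 := by simp only [mem_Icc, mem_range, not_and, not_le] at hi hi'; omega
    simp [basketWeight_zero]
  rw [hIcc, inv_one_sub_X_mul_one_sub_X_pow_mul_sum hr fun i => by
    simpa using basketWeight_periodic (r := r) (b := b) i]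

/-- Altınok's Hilbert series formula (Theorem 2.2 of the paper), as a power series identity.
For a finite basket of singularities of types `(1/r_j)(b_j,1,−1)` and `K = −K_Y³ ∈ ℚ`, with
`χ(n)` the value of Reid's Orbifold Riemann–Roch formula for `χ(O_Y(−nK_Y))` (with
`χ(O_Y) = 1` and `−K_Y·c₂ = 24 − ∑_j (r_j²−1)/r_j`), one has in `ℚ⟦t⟧`:
`∑_{n≥0} χ(n)tⁿ = (1+t)/(1−t)² + (K/2)(t+t²)/(1−t)⁴
   − ∑_j (1/((1−t)(1−t^{r_j})))·∑_{i=1}^{r_j−1} [b_j i]_{r_j}(r_j−[b_j i]_{r_j})/(2r_j)·t^i`. -/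
theorem altinok_hilbert_series_formula {J : Type*} [Fintype J]
    (r : J → ℕ) (hr : ∀ j, 2 ≤ r j) (b : J → ℤ)
    (hb : ∀ j, IsCoprime (b j) ((r j : ℤ))) (K : ℚ)
    (χ : ℕ → ℚ)
    (hχ : ∀ n : ℕ, χ n =
      1 + ((2 * (n : ℚ) ^ 3 + 3 * (n : ℚ) ^ 2 + n) / 12) * K
        + ((n : ℚ) / 12) * (24 - ∑ j, ((r j : ℚ) ^ 2 - 1) / (r j))
        + ∑ j, (-((((-(n : ℤ)) % (r j : ℤ)) : ℤ) : ℚ) * ((r j : ℚ) ^ 2 - 1) / (12 * r j)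
            + ∑ k ∈ Finset.Icc (1 : ℤ) ((-(n : ℤ)) % (r j : ℤ) - 1),
                (((b j * k) % (r j : ℤ) : ℤ) : ℚ)
                  * ((r j : ℚ) - (((b j * k) % (r j : ℤ) : ℤ) : ℚ)) / (2 * r j))) :
    PowerSeries.mk χ
      = (1 + X) * ((1 - X) ^ 2)⁻¹
        + PowerSeries.C (R := ℚ) (K / 2) * (X + X ^ 2) * ((1 - X) ^ 4)⁻¹
        - ∑ j, ((1 - X) * (1 - X ^ (r j)))⁻¹
            * ∑ i ∈ Finset.Icc 1 (r j - 1),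
                PowerSeries.C (R := ℚ) ((((b j * i) % (r j : ℤ) : ℤ) : ℚ)
                    * ((r j : ℚ) - (((b j * i) % (r j : ℤ) : ℤ) : ℚ)) / (2 * r j))
                  * (X : PowerSeries ℚ) ^ i := by
  have hr₀ (j : J) : 0 < r j := by have := hr j; omega
  have hcorr (j : J) (n : ℕ) := basketCorrection_eq (hr₀ j) (hb j) n
  have hseries (j : J) := inv_one_sub_X_mul_one_sub_X_pow_mul_sum_basketWeight (hr₀ j) (b j)
  simp only [basketCorrection, basketWeight] at hcorr hseries
  rw [one_add_X_mul_inv_one_sub_X_sq, C_half_mul_X_add_X_sq_mul_inv_one_sub_X_pow_four,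
    sum_congr rfl fun j _ => hseries j]
  ext n
  simp only [map_sub, map_add, map_sum, coeff_mk, hχ n, hcorr, sum_sub_distrib, ← mul_sum]
  ring
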